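/- Let (k_n)_{n≥1} be a sequence of positive integers with partial sums s_n, and let (d_i)_{i≥1} be a bounded nonnegative real sequence such that limsup_{n→∞} (1/k_n)·(d_1 + ⋯ + d_{s_n}) > 0. Let D = diag(d). Then there do not exist a compact operator C and a bounded operator Z on H, at least one of which is block tridiagonal with central block sizes k_n, such that D = C∘Z − Z∘C. Equivalently: if D = C∘Z − Z∘C with Z bounded and at least one of C, Z block tridiagonal with central block sizes k_n, then C is not compact. -/

import Mathlib

open Filter

variable {H : Type*} [NormedAddCommGroup H] [InnerProductSpace ℂ H] [CompleteSpace H]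

/-- Partial sums `s n = k 1 + ⋯ + k n` of a sequence of block sizes (with `s 0 = 0`). -/
def psum (k : ℕ → ℕ) (n : ℕ) : ℕ := ∑ j ∈ Finset.Icc 1 n, k j

/-- The block index `b i` of an index `i ≥ 1`: the unique `n` with `s (n-1) < i ≤ s n`
(realized as the least `n` with `i ≤ s n`). -/
noncomputable def blockIdx (k : ℕ → ℕ) (i : ℕ) : ℕ := sInf {n | i ≤ psum k n}

/-- A bounded operator `W` is block tridiagonal with central block sizes `k n` if
`⟪e i, W (e j)⟫ = 0` whenever `|b i - b j| ≥ 2`. -/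
def IsBlockTridiagonal (e : HilbertBasis ℕ+ ℂ H) (k : ℕ → ℕ) (W : H →L[ℂ] H) : Prop :=
  ∀ i j : ℕ+, 2 ≤ |(blockIdx k (i : ℕ) : ℤ) - (blockIdx k (j : ℕ) : ℤ)| →
    (inner ℂ (e i) (W (e j)) : ℂ) = 0

/-- The orthogonal projection `P n` onto `span {e i : s (n-1) < i ≤ s n}`. -/
noncomputable def blockProj (e : HilbertBasis ℕ+ ℂ H) (k : ℕ → ℕ) (n : ℕ) : H →L[ℂ] H :=
  ∑ i ∈ (Finset.Ioc (psum k (n - 1)) (psum k n)).attach,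
    (innerSL ℂ (e ⟨i.1, Nat.lt_of_le_of_lt (Nat.zero_le _) (Finset.mem_Ioc.mp i.2).1⟩)).smulRight
      (e ⟨i.1, Nat.lt_of_le_of_lt (Nat.zero_le _) (Finset.mem_Ioc.mp i.2).1⟩)

/-- The partial trace `∑_{j=1}^m ⟪e j, T (e j)⟫`. -/
noncomputable def ptrace (e : HilbertBasis ℕ+ ℂ H) (T : H →L[ℂ] H) (m : ℕ) : ℂ :=
  ∑ i ∈ (Finset.Icc 1 m).attach,
    (inner ℂ (e ⟨i.1, (Finset.mem_Icc.mp i.2).1⟩) (T (e ⟨i.1, (Finset.mem_Icc.mp i.2).1⟩)) : ℂ)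

/-- The upper off-diagonal block `A n (W) = P n ∘ W ∘ P (n+1)`. -/
noncomputable def blockA (e : HilbertBasis ℕ+ ℂ H) (k : ℕ → ℕ) (n : ℕ) (W : H →L[ℂ] H) :
    H →L[ℂ] H :=
  blockProj e k n ∘L W ∘L blockProj e k (n + 1)

/-- The lower off-diagonal block `B n (W) = P (n+1) ∘ W ∘ P n`. -/
noncomputable def blockB (e : HilbertBasis ℕ+ ℂ H) (k : ℕ → ℕ) (n : ℕ) (W : H →L[ℂ] H) :
    H →L[ℂ] H :=
  blockProj e k (n + 1) ∘L W ∘L blockProj e k n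

/-!
Let `Q` be the orthogonal projection onto `span {e 1, …, e (s (n+1))}` and `T = 1 - Q`. The
operators `Q C Q Z Q` and `Q Z Q C Q` have the same finite trace, so the partial trace
`d 1 + ⋯ + d (s (n+1))` of `D = C Z - Z C` equals `∑_{i ≤ s (n+1)} ⟪e i, (C T Z - Z T C) e i⟫`.
Block tridiagonality of `C` or of `Z` kills the terms with `i ≤ s n`, and each of the remaining
`k (n+1)` terms is at most `‖T C*‖ ‖Z‖ + ‖Z‖ ‖T C‖`. Both norms tend to `0` because `C` is compact
(for `C*` through the C*-identity `‖T C*‖² ≤ ‖T C* C‖`), so the averages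
`(d 1 + ⋯ + d (s (n+1))) / k (n+1)` tend to `0`.
-/

open scoped InnerProductSpace Topology
open InnerProductSpace (rankOne)

lemma IsSelfAdjoint.norm_mul_mul_sub_mul_mul_le {A : Type*} [NormedRing A] [StarRing A]
    [NormedStarGroup A] {t : A} (ht : IsSelfAdjoint t) (x y : A) :
    ‖x * t * y - y * t * x‖ ≤ ‖t * star x‖ * ‖y‖ + ‖y‖ * ‖t * x‖ := by
  have hxt : ‖x * t‖ = ‖t * star x‖ := by rw [← norm_star, star_mul, ht.star_eq]
  calc ‖x * t * y - y * t * x‖ ≤ ‖x * t * y‖ + ‖y * (t * x)‖ := by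
        rw [← mul_assoc]; exact norm_sub_le _ _
    _ ≤ ‖t * star x‖ * ‖y‖ + ‖y‖ * ‖t * x‖ := by
        rw [← hxt]; exact add_le_add (norm_mul_le _ _) (norm_mul_le _ _)

lemma IsStarProjection.norm_mul_star_sq_le {A : Type*} [NormedRing A] [StarRing A]
    [CStarRing A] {p : A} (hp : IsStarProjection p) (c : A) :
    ‖p * star c‖ ^ 2 ≤ ‖p * (star c * c)‖ :=
  calc ‖p * star c‖ ^ 2 = ‖p * (star c * c) * p‖ := by
        rw [sq, ← CStarRing.norm_self_mul_star, star_mul, star_star, hp.isSelfAdjoint.star_eq]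
        simp only [mul_assoc]
    _ ≤ ‖p * (star c * c)‖ * ‖p‖ := norm_mul_le _ _
    _ ≤ ‖p * (star c * c)‖ := mul_le_of_le_one_right (norm_nonneg _) (hp.norm_le _)

lemma inner_mul_mul_apply_eq_zero {𝕜 E : Type*} [RCLike 𝕜] [NormedAddCommGroup E]
    [InnerProductSpace 𝕜 E] [CompleteSpace E] {T : E →L[𝕜] E} (hT : IsSelfAdjoint T)
    {X Y : E →L[𝕜] E} {v : E} (h : T (star X v) = 0 ∨ T (Y v) = 0) :
    ⟪v, (X * T * Y) v⟫_𝕜 = 0 := by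
  rw [mul_apply_eq_comp, mul_apply_eq_comp]
  rcases h with h | h
  · rw [← ContinuousLinearMap.adjoint_inner_left X, ← ContinuousLinearMap.adjoint_inner_left T,
      hT.adjoint_eq, ← ContinuousLinearMap.star_eq_adjoint, h, inner_zero_left]
  · rw [h, map_zero, inner_zero_right]

section FinsetProj

variable {ι 𝕜 E : Type*} [RCLike 𝕜] [NormedAddCommGroup E] [InnerProductSpace 𝕜 E]

variable (𝕜) in
/-- For an orthonormal family `v`, the orthogonal projection onto `span {v i | i ∈ s}`. -/
noncomputable def finsetProj (v : ι → E) (s : Finset ι) : E →L[𝕜] E :=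
  ∑ i ∈ s, rankOne 𝕜 (v i) (v i)

lemma finsetProj_apply (v : ι → E) (s : Finset ι) (x : E) :
    finsetProj 𝕜 v s x = ∑ i ∈ s, ⟪v i, x⟫_𝕜 • v i := by
  simp [finsetProj]

lemma sum_inner_mul_finsetProj_mul_comm (v : ι → E) (s : Finset ι) (X Y : E →L[𝕜] E) :
    ∑ i ∈ s, ⟪v i, (X * finsetProj 𝕜 v s * Y : E →L[𝕜] E) (v i)⟫_𝕜
      = ∑ i ∈ s, ⟪v i, (Y * finsetProj 𝕜 v s * X : E →L[𝕜] E) (v i)⟫_𝕜 := by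
  have expand : ∀ A B : E →L[𝕜] E, ∀ i, ⟪v i, (A * finsetProj 𝕜 v s * B : E →L[𝕜] E) (v i)⟫_𝕜
      = ∑ j ∈ s, ⟪v j, B (v i)⟫_𝕜 * ⟪v i, A (v j)⟫_𝕜 := fun A B i => by
    simp [finsetProj_apply, inner_sum, inner_smul_right]
  simp only [expand]
  rw [Finset.sum_comm]
  exact Finset.sum_congr rfl fun _ _ => Finset.sum_congr rfl fun _ _ => mul_comm _ _

lemma sum_inner_commutator_apply (v : ι → E) (s : Finset ι) (X Y : E →L[𝕜] E) :
    ∑ i ∈ s, ⟪v i, (X * Y - Y * X : E →L[𝕜] E) (v i)⟫_𝕜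
      = ∑ i ∈ s, ⟪v i, (X * (1 - finsetProj 𝕜 v s) * Y - Y * (1 - finsetProj 𝕜 v s) * X :
          E →L[𝕜] E) (v i)⟫_𝕜 := by
  have h := sum_inner_mul_finsetProj_mul_comm v s X Y
  simp only [mul_sub, sub_mul, mul_one, sub_apply, inner_sub_right,
    Finset.sum_sub_distrib] at h ⊢
  linear_combination h

variable [CompleteSpace E]

lemma Orthonormal.isStarProjection_finsetProj {v : ι → E} (hv : Orthonormal 𝕜 v)
    (s : Finset ι) : IsStarProjection (finsetProj 𝕜 v s) where
  isIdempotentElem := by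
    ext x
    rw [mul_apply_eq_comp, finsetProj_apply _ _ (finsetProj 𝕜 _ _ x),
      finsetProj_apply _ _ x]
    exact Finset.sum_congr rfl fun i hi => by rw [hv.inner_right_sum _ hi]
  isSelfAdjoint := by
    simp [IsSelfAdjoint, finsetProj, star_sum, ContinuousLinearMap.star_eq_adjoint]

lemma Orthonormal.isStarProjection_one_sub_finsetProj {v : ι → E} (hv : Orthonormal 𝕜 v)
    (s : Finset ι) : IsStarProjection (1 - finsetProj 𝕜 v s) :=
  isStarProjection_one_sub_iff.mpr (hv.isStarProjection_finsetProj s)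

lemma norm_sum_inner_commutator_apply_le [DecidableEq ι] {v : ι → E} (hv : Orthonormal 𝕜 v)
    {s' s : Finset ι} (hs : s' ⊆ s) (X Y : E →L[𝕜] E)
    (hzero : ∀ i ∈ s', ⟪v i, (X * (1 - finsetProj 𝕜 v s) * Y - Y * (1 - finsetProj 𝕜 v s) * X :
      E →L[𝕜] E) (v i)⟫_𝕜 = 0) :
    ‖∑ i ∈ s, ⟪v i, (X * Y - Y * X : E →L[𝕜] E) (v i)⟫_𝕜‖
      ≤ (s \ s').card * (‖(1 - finsetProj 𝕜 v s) * star X‖ * ‖Y‖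
          + ‖Y‖ * ‖(1 - finsetProj 𝕜 v s) * X‖) := by
  set T : E →L[𝕜] E := 1 - finsetProj 𝕜 v s
  have hT : IsSelfAdjoint T :=
    (hv.isStarProjection_one_sub_finsetProj s).isSelfAdjoint
  rw [sum_inner_commutator_apply, ← Finset.sum_sdiff hs, Finset.sum_eq_zero hzero, add_zero]
  calc _ ≤ ∑ _i ∈ s \ s', (‖T * star X‖ * ‖Y‖ + ‖Y‖ * ‖T * X‖) :=
        norm_sum_le_of_le _ fun i _ => ?_
    _ = _ := by rw [Finset.sum_const, nsmul_eq_mul]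
  calc _ ≤ ‖v i‖ * ‖(X * T * Y - Y * T * X) (v i)‖ := norm_inner_le_norm _ _
    _ ≤ ‖X * T * Y - Y * T * X‖ := by simpa [hv.1 i] using (X * T * Y - Y * T * X).le_opNorm (v i)
    _ ≤ _ := hT.norm_mul_mul_sub_mul_mul_le X Y

end FinsetProj

lemma eventually_forall_norm_apply_le_of_tendsto {α 𝕜 E F : Type*} [NontriviallyNormedField 𝕜]
    [NormedAddCommGroup E] [NormedSpace 𝕜 E] [NormedAddCommGroup F] [NormedSpace 𝕜 F]
    {l : Filter α} {T : α → E →L[𝕜] F} (hT : ∀ a, ‖T a‖ ≤ 1)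
    (hlim : ∀ x, Tendsto (fun a => T a x) l (𝓝 0)) {K : Set E} (hK : IsCompact K)
    {ε : ℝ} (hε : 0 < ε) :
    ∀ᶠ a in l, ∀ y ∈ K, ‖T a y‖ ≤ ε := by
  obtain ⟨t, -, ht, hcover⟩ := hK.finite_cover_balls (half_pos hε)
  have hnet : ∀ᶠ a in l, ∀ z ∈ t, ‖T a z‖ ≤ ε / 2 :=
    ht.eventually_all.mpr fun z _ => by
      simpa using (hlim z).norm.eventually (ge_mem_nhds (by simpa using half_pos hε))
  filter_upwards [hnet] with a ha y hy
  obtain ⟨z, hz, hyz⟩ := Set.mem_iUnion₂.mp (hcover hy)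
  calc ‖T a y‖ = ‖T a (y - z) + T a z‖ := by rw [map_sub, sub_add_cancel]
    _ ≤ ‖T a (y - z)‖ + ‖T a z‖ := norm_add_le _ _
    _ ≤ 1 * ‖y - z‖ + ε / 2 := add_le_add ((T a).le_of_opNorm_le (hT a) _) (ha z hz)
    _ ≤ ε := by rw [one_mul, ← dist_eq_norm]; linarith [Metric.mem_ball.mp hyz]

namespace HilbertBasis

variable {ι 𝕜 E : Type*} [RCLike 𝕜] [NormedAddCommGroup E] [InnerProductSpace 𝕜 E]
  (b : HilbertBasis ι 𝕜 E)

lemma tendsto_finsetProj_apply (x : E) :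
    Tendsto (fun s => finsetProj 𝕜 b s x) atTop (𝓝 x) := by
  simp only [finsetProj_apply, ← b.repr_apply_apply]
  exact b.hasSum_repr x

lemma finsetProj_apply_eq_self {s : Finset ι} {x : E} (hx : ∀ i ∉ s, ⟪b i, x⟫_𝕜 = 0) :
    finsetProj 𝕜 b s x = x := by
  have h : HasSum (fun i => b.repr x i • b i) (∑ i ∈ s, b.repr x i • b i) :=
    hasSum_sum_of_ne_finset_zero fun i hi => by simp [b.repr_apply_apply, hx i hi]
  simpa [finsetProj_apply, b.repr_apply_apply] using h.unique (b.hasSum_repr x)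

variable [CompleteSpace E]

lemma tendsto_norm_one_sub_finsetProj_mul {C : E →L[𝕜] E} (hC : IsCompactOperator C) :
    Tendsto (fun s => ‖(1 - finsetProj 𝕜 b s) * C‖) atTop (𝓝 0) := by
  have hnorm : ∀ s, ‖1 - finsetProj 𝕜 b s‖ ≤ 1 := fun s =>
    IsStarProjection.norm_le _ (b.orthonormal.isStarProjection_one_sub_finsetProj s)
  have hlim : ∀ x, Tendsto (fun s => (1 - finsetProj 𝕜 b s) x) atTop (𝓝 0) := fun x => by
    simpa using (tendsto_const_nhds (x := x)).sub (b.tendsto_finsetProj_apply x)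
  refine Metric.tendsto_nhds.mpr fun ε hε => ?_
  filter_upwards [eventually_forall_norm_apply_le_of_tendsto hnorm hlim
    (hC.isCompact_closure_image_closedBall 1) (half_pos hε)] with s hs
  rw [dist_zero_right, norm_norm]
  refine lt_of_le_of_lt (ContinuousLinearMap.opNorm_le_of_unit_norm (half_pos hε).le
    fun x hx => hs _ (subset_closure ⟨x, by simp [hx], rfl⟩)) (half_lt_self hε)

lemma tendsto_norm_one_sub_finsetProj_mul_star {C : E →L[𝕜] E} (hC : IsCompactOperator C) :
    Tendsto (fun s => ‖(1 - finsetProj 𝕜 b s) * star C‖) atTop (𝓝 0) := by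
  have hCC : IsCompactOperator (star C * C) := hC.clm_comp (star C)
  have h := (b.tendsto_norm_one_sub_finsetProj_mul hCC).sqrt
  rw [Real.sqrt_zero] at h
  refine squeeze_zero (fun _ => norm_nonneg _) (fun s => Real.le_sqrt_of_sq_le ?_) h
  exact (b.orthonormal.isStarProjection_one_sub_finsetProj s).norm_mul_star_sq_le C

end HilbertBasis

section Blocks

variable (k : ℕ → ℕ)

lemma self_le_psum (hk : ∀ n, 1 ≤ n → 1 ≤ k n) (n : ℕ) : n ≤ psum k n := by
  simpa [psum] using
    Finset.card_nsmul_le_sum (Finset.Icc 1 n) k 1 fun j hj => hk j (Finset.mem_Icc.mp hj).1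

lemma psum_mono : Monotone (psum k) := fun _ _ h =>
  Finset.sum_le_sum_of_subset (Finset.Icc_subset_Icc_right h)

lemma psum_succ (n : ℕ) : psum k (n + 1) = psum k n + k (n + 1) :=
  Finset.sum_Icc_succ_top (Nat.le_add_left 1 n) k

lemma blockIdx_le_of_le_psum {i n : ℕ} (h : i ≤ psum k n) : blockIdx k i ≤ n :=
  Nat.sInf_le h

lemma lt_blockIdx_of_psum_lt (hk : ∀ n, 1 ≤ n → 1 ≤ k n) {i n : ℕ} (h : psum k n < i) :
    n < blockIdx k i := by
  by_contra! hle
  have hmem : i ≤ psum k (blockIdx k i) :=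
    Nat.sInf_mem (s := {n | i ≤ psum k n}) ⟨i, self_le_psum k hk i⟩
  exact h.not_ge (hmem.trans (psum_mono k hle))

end Blocks

noncomputable def pnatsLE (m : ℕ) : Finset ℕ+ :=
  (Finset.Icc 1 m).preimage PNat.val PNat.coe_injective.injOn

lemma mem_pnatsLE {m : ℕ} {i : ℕ+} : i ∈ pnatsLE m ↔ (i : ℕ) ≤ m := by
  simpa [pnatsLE] using fun _ => Nat.one_le_iff_ne_zero.mpr i.ne_zero

lemma sum_pnatsLE {M : Type*} [AddCommMonoid M] (f : ℕ → M) (m : ℕ) :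
    ∑ i ∈ pnatsLE m, f i = ∑ j ∈ Finset.Icc 1 m, f j :=
  Finset.sum_preimage _ _ _ _ fun j hj hj' => absurd ⟨⟨j, (Finset.mem_Icc.mp hj).1⟩, rfl⟩ hj'

lemma card_pnatsLE (m : ℕ) : (pnatsLE m).card = m := by
  rw [Finset.card_eq_sum_ones]
  exact (sum_pnatsLE (fun _ => 1) m).trans (by simp)

lemma tendsto_pnatsLE_atTop : Tendsto pnatsLE atTop atTop :=
  tendsto_atTop_finset_of_monotone (fun _ _ h _ hi => mem_pnatsLE.mpr ((mem_pnatsLE.mp hi).trans h))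
    fun i => ⟨i, mem_pnatsLE.mpr le_rfl⟩

lemma tendsto_pnatsLE_psum_atTop {k : ℕ → ℕ} (hk : ∀ n, 1 ≤ n → 1 ≤ k n) :
    Tendsto (fun n => pnatsLE (psum k n)) atTop atTop :=
  tendsto_pnatsLE_atTop.comp (tendsto_atTop_mono (self_le_psum k hk) tendsto_id)

noncomputable def tailProj (e : HilbertBasis ℕ+ ℂ H) (m : ℕ) : H →L[ℂ] H :=
  1 - finsetProj ℂ e (pnatsLE m)

lemma IsBlockTridiagonal.tailProj_apply_eq_zero (e : HilbertBasis ℕ+ ℂ H) {k : ℕ → ℕ}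
    (hk : ∀ n, 1 ≤ n → 1 ≤ k n) {W : H →L[ℂ] H} (hW : IsBlockTridiagonal e k W) {n : ℕ}
    {i : ℕ+} (hi : (i : ℕ) ≤ psum k n) :
    tailProj e (psum k (n + 1)) (W (e i)) = 0 ∧
      tailProj e (psum k (n + 1)) (star W (e i)) = 0 := by
  have hgap : ∀ j ∉ pnatsLE (psum k (n + 1)),
      2 ≤ |(blockIdx k j : ℤ) - (blockIdx k i : ℤ)| := fun j hj => by
    have h₁ := blockIdx_le_of_le_psum k hi
    have h₂ := lt_blockIdx_of_psum_lt k hk (not_le.mp (mt mem_pnatsLE.mpr hj))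
    rw [abs_of_nonneg (by omega)]
    omega
  have hfix : ∀ x : H, (∀ j ∉ pnatsLE (psum k (n + 1)), ⟪e j, x⟫_ℂ = 0) →
      tailProj e (psum k (n + 1)) x = 0 := fun x hx => by
    simp [tailProj, e.finsetProj_apply_eq_self hx]
  refine ⟨hfix _ fun j hj => hW j i (hgap j hj), hfix _ fun j hj => ?_⟩
  rw [ContinuousLinearMap.star_eq_adjoint, ContinuousLinearMap.adjoint_inner_right,
    ← inner_conj_symm, hW i j (by rw [abs_sub_comm]; exact hgap j hj), map_zero]

lemma norm_sum_inner_commutator_le_of_isBlockTridiagonal (e : HilbertBasis ℕ+ ℂ H)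
    {k : ℕ → ℕ} (hk : ∀ n, 1 ≤ n → 1 ≤ k n) {C Z : H →L[ℂ] H}
    (htri : IsBlockTridiagonal e k C ∨ IsBlockTridiagonal e k Z) (n : ℕ) :
    ‖∑ i ∈ pnatsLE (psum k (n + 1)), ⟪e i, (C * Z - Z * C) (e i)⟫_ℂ‖
      ≤ k (n + 1) * (‖tailProj e (psum k (n + 1)) * star C‖ * ‖Z‖
          + ‖Z‖ * ‖tailProj e (psum k (n + 1)) * C‖) := by
  have hsub : pnatsLE (psum k n) ⊆ pnatsLE (psum k (n + 1)) := fun i hi =>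
    mem_pnatsLE.mpr ((mem_pnatsLE.mp hi).trans (psum_mono k n.le_succ))
  have hcard : ((pnatsLE (psum k (n + 1)) \ pnatsLE (psum k n)).card : ℝ) = k (n + 1) := by
    rw [Finset.card_sdiff_of_subset hsub, card_pnatsLE, card_pnatsLE, psum_succ,
      Nat.add_sub_cancel_left]
  rw [← hcard]
  refine norm_sum_inner_commutator_apply_le e.orthonormal hsub C Z fun i hi => ?_
  have hT : IsSelfAdjoint (tailProj e (psum k (n + 1))) :=
    (e.orthonormal.isStarProjection_one_sub_finsetProj _).isSelfAdjoint
  have hzero := fun W (hW : IsBlockTridiagonal e k W) =>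
    hW.tailProj_apply_eq_zero e hk (mem_pnatsLE.mp hi)
  simp only [tailProj] at hT hzero
  rw [sub_apply, inner_sub_right]
  rcases htri with hC | hZ
  · obtain ⟨h₁, h₂⟩ := hzero C hC
    rw [inner_mul_mul_apply_eq_zero hT (.inl h₂), inner_mul_mul_apply_eq_zero hT (.inr h₁),
      sub_zero]
  · obtain ⟨h₁, h₂⟩ := hzero Z hZ
    rw [inner_mul_mul_apply_eq_zero hT (.inr h₁), inner_mul_mul_apply_eq_zero hT (.inl h₂),
      sub_zero]

theorem diag_not_commutator_of_limsup_pos_general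
    (e : HilbertBasis ℕ+ ℂ H) (k : ℕ → ℕ) (hk : ∀ n, 1 ≤ n → 1 ≤ k n)
    (d : ℕ → ℝ)
    (hlimsup : ∃ c : ℝ, 0 < c ∧
      ∃ᶠ n in atTop, c ≤ (∑ j ∈ Finset.Icc 1 (psum k n), d j) / (k n : ℝ))
    (D : H →L[ℂ] H) (hD : ∀ i : ℕ+, D (e i) = (d (i : ℕ) : ℂ) • e i) :
    ¬ ∃ C Z : H →L[ℂ] H, IsCompactOperator (⇑C) ∧
      (IsBlockTridiagonal e k C ∨ IsBlockTridiagonal e k Z) ∧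
      D = C ∘L Z - Z ∘L C := by
  rintro ⟨C, Z, hC, htri, hDCZ⟩
  replace hDCZ : D = C * Z - Z * C := hDCZ
  obtain ⟨c, hc, hfreq⟩ := hlimsup
  set δ : ℕ → ℝ := fun m => ‖tailProj e m * star C‖ * ‖Z‖ + ‖Z‖ * ‖tailProj e m * C‖
  have hδ : Tendsto (fun n => δ (psum k n)) atTop (𝓝 0) := by
    have hs := tendsto_pnatsLE_psum_atTop hk
    have h := (((e.tendsto_norm_one_sub_finsetProj_mul_star hC).comp hs).mul_const ‖Z‖).add
      (((e.tendsto_norm_one_sub_finsetProj_mul hC).comp hs).const_mul ‖Z‖)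
    rwa [zero_mul, mul_zero, add_zero] at h
  have hratio : ∀ n, (∑ j ∈ Finset.Icc 1 (psum k (n + 1)), d j) / k (n + 1)
      ≤ δ (psum k (n + 1)) := fun n => by
    refine div_le_of_le_mul₀ (Nat.cast_nonneg _) (by positivity) ?_
    calc _ ≤ ‖((∑ j ∈ Finset.Icc 1 (psum k (n + 1)), d j : ℝ) : ℂ)‖ := by
          rw [Complex.norm_real]; exact le_abs_self _
      _ = ‖∑ i ∈ pnatsLE (psum k (n + 1)), ⟪e i, D (e i)⟫_ℂ‖ := by
          rw [Complex.ofReal_sum, ← sum_pnatsLE]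
          simp [hD, e.orthonormal.1]
      _ ≤ _ := hDCZ ▸ norm_sum_inner_commutator_le_of_isBlockTridiagonal e hk htri n
      _ = _ := mul_comm _ _
  obtain ⟨n, hn, hδn, hn₁⟩ := (hfreq.and_eventually
    ((hδ.eventually (gt_mem_nhds hc)).and (eventually_ge_atTop 1))).exists
  obtain ⟨n, rfl⟩ := Nat.exists_eq_add_of_le' hn₁
  linarith [hratio n]

/-- Let `(d i)_{i ≥ 1}` be a bounded nonnegative sequence with
`limsup (1/k n) * (d 1 + ⋯ + d (s n)) > 0`, and let `D = diag d`. Then `D` is not the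
commutator of a compact operator `C` and a bounded operator `Z` with at least one of `C, Z`
block tridiagonal with central block sizes `k n`. -/
theorem diag_not_commutator_of_limsup_pos
    (e : HilbertBasis ℕ+ ℂ H) (k : ℕ → ℕ) (hk : ∀ n, 1 ≤ n → 1 ≤ k n)
    (d : ℕ → ℝ) (hdnn : ∀ i, 1 ≤ i → 0 ≤ d i) (hdbd : ∃ M : ℝ, ∀ i, 1 ≤ i → d i ≤ M)
    (hlimsup : ∃ c : ℝ, 0 < c ∧
      ∃ᶠ n in atTop, c ≤ (∑ j ∈ Finset.Icc 1 (psum k n), d j) / (k n : ℝ))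
    (D : H →L[ℂ] H) (hD : ∀ i : ℕ+, D (e i) = (d (i : ℕ) : ℂ) • e i) :
    ¬ ∃ C Z : H →L[ℂ] H, IsCompactOperator (⇑C) ∧
      (IsBlockTridiagonal e k C ∨ IsBlockTridiagonal e k Z) ∧
      D = C ∘L Z - Z ∘L C :=
  diag_not_commutator_of_limsup_pos_general e k hk d hlimsup D hD
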